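/- Let f : R^d -> R be differentiable with L-Lipschitz continuous gradient, let x in R^d, let N be a norm on R^d, let A be a symmetric positive definite matrix, and let 0 < alpha <= 2, eta > 0, rho > 0, sigma >= 0, R in R. Let g_tilde be an integrable random vector in R^d satisfying E[<g_tilde, nabla f(x)>] >= N(nabla f(x))^alpha + R and E ||g_tilde||_2^2 <= rho ||nabla f(x)||_A^2 + sigma^2. Then eta * ( N(nabla f(x))^alpha - (L * eta * rho / 2) * ||nabla f(x)||_A^2 ) <= f(x) - E[f(x - eta * g_tilde)] - eta * R + (L * eta^2 * sigma^2) / 2. -/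

import Mathlib

/-!
By the descent lemma, an `L`-Lipschitz gradient gives the quadratic upper bound
`f (x + v) ≤ f x + ⟪∇f x, v⟫ + L/2 ‖v‖²`; it follows by comparing `t ↦ f (x + t • v)` on `[0, 1]`
with the parabola whose derivative dominates `⟪∇f (x + t • v), v⟫`. Taking `v = -η g̃` and
integrating, the expectation of `f (x - η g̃)` is at most
`f x - η E⟪g̃, ∇f x⟫ + L η² / 2 · E‖g̃‖²`, and the descent condition and the second-moment bound
turn this into the claim.
-/

open MeasureTheory Finset

/-- The quadratic form `‖y‖_A² = yᵀ A y` associated with a matrix `A`. -/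
noncomputable def quadForm {d : ℕ} (A : Matrix (Fin d) (Fin d) ℝ)
    (y : EuclideanSpace ℝ (Fin d)) : ℝ :=
  ∑ i, ∑ j, y i * A i j * y j

open scoped RealInnerProductSpace

section

variable {E : Type*} [NormedAddCommGroup E] [InnerProductSpace ℝ E]

theorem HasGradientAt.hasDerivAt_comp_add_smul [CompleteSpace E] {f : E → ℝ} {g x v : E}
    {t : ℝ} (h : HasGradientAt f g (x + t • v)) :
    HasDerivAt (fun s : ℝ => f (x + s • v)) ⟪g, v⟫ t := by
  have hline : HasDerivAt (fun s : ℝ => x + s • v) v t := by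
    simpa using ((hasDerivAt_id t).smul_const v).const_add x
  exact h.hasFDerivAt.comp_hasDerivAt t hline

variable {f : E → ℝ} {Gf : E → E} {L : ℝ}

theorem inner_gradient_add_smul_sub_le (hLip : ∀ y z, ‖Gf y - Gf z‖ ≤ L * ‖y - z‖)
    (x v : E) {t : ℝ} (ht : 0 ≤ t) : ⟪Gf (x + t • v), v⟫ - ⟪Gf x, v⟫ ≤ L * ‖v‖ ^ 2 * t := by
  have hLip_t : ‖Gf (x + t • v) - Gf x‖ ≤ L * (t * ‖v‖) := by
    simpa [norm_smul, abs_of_nonneg ht] using hLip (x + t • v) x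
  calc ⟪Gf (x + t • v), v⟫ - ⟪Gf x, v⟫ = ⟪Gf (x + t • v) - Gf x, v⟫ := (inner_sub_left ..).symm
    _ ≤ ‖Gf (x + t • v) - Gf x‖ * ‖v‖ := real_inner_le_norm ..
    _ ≤ L * (t * ‖v‖) * ‖v‖ := by gcongr
    _ = L * ‖v‖ ^ 2 * t := by ring

theorem le_add_inner_add_sq_of_lipschitz_gradient [CompleteSpace E]
    (hgrad : ∀ y, HasGradientAt f (Gf y) y)
    (hLip : ∀ y z, ‖Gf y - Gf z‖ ≤ L * ‖y - z‖) (x v : E) :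
    f (x + v) ≤ f x + ⟪Gf x, v⟫ + L / 2 * ‖v‖ ^ 2 := by
  have hderiv (t : ℝ) : HasDerivAt (fun s : ℝ => f (x + s • v)) ⟪Gf (x + t • v), v⟫ t :=
    (hgrad _).hasDerivAt_comp_add_smul
  have hB (t : ℝ) : HasDerivAt (fun s : ℝ => f x + s * ⟪Gf x, v⟫ + L / 2 * ‖v‖ ^ 2 * s ^ 2)
      (⟪Gf x, v⟫ + L * ‖v‖ ^ 2 * t) t := by
    refine ((((hasDerivAt_id t).mul_const ⟪Gf x, v⟫).const_add (f x)).add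
      ((hasDerivAt_pow 2 t).const_mul (L / 2 * ‖v‖ ^ 2))).congr_deriv ?_
    simp only [Nat.cast_ofNat, one_mul]; ring
  have key := image_le_of_deriv_right_le_deriv_boundary (a := 0) (b := 1)
    (fun t _ => (hderiv t).continuousAt.continuousWithinAt)
    (fun t _ => (hderiv t).hasDerivWithinAt) (by simp)
    (fun t _ => (hB t).continuousAt.continuousWithinAt) (fun t _ => (hB t).hasDerivWithinAt)
    (fun t ht => by linarith [inner_gradient_add_smul_sub_le hLip x v ht.1])
    (Set.right_mem_Icc.2 zero_le_one)
  simpa using key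

theorem integral_comp_sub_smul_le [CompleteSpace E] {Ω : Type*} [MeasurableSpace Ω]
    {μ : Measure Ω} [IsProbabilityMeasure μ] (hgrad : ∀ y, HasGradientAt f (Gf y) y)
    (hLip : ∀ y z, ‖Gf y - Gf z‖ ≤ L * ‖y - z‖) (x : E) (η : ℝ) {g : Ω → E}
    (hg : Integrable g μ) (hg2 : Integrable (fun ω => ‖g ω‖ ^ 2) μ)
    (hf : Integrable (fun ω => f (x - η • g ω)) μ) :
    ∫ ω, f (x - η • g ω) ∂μ
      ≤ f x - η * ∫ ω, ⟪g ω, Gf x⟫ ∂μ + L / 2 * η ^ 2 * ∫ ω, ‖g ω‖ ^ 2 ∂μ := by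
  have hlinear : Integrable (fun ω => f x - η * ⟪g ω, Gf x⟫) μ :=
    (integrable_const _).sub ((hg.inner_const _).const_mul η)
  have hpointwise (ω : Ω) :
      f (x - η • g ω) ≤ f x - η * ⟪g ω, Gf x⟫ + L / 2 * η ^ 2 * ‖g ω‖ ^ 2 := by
    have := le_add_inner_add_sq_of_lipschitz_gradient hgrad hLip x (-(η • g ω))
    simp only [inner_neg_right, inner_smul_right, norm_neg, norm_smul, Real.norm_eq_abs,
      mul_pow, sq_abs] at this
    rw [sub_eq_add_neg, real_inner_comm]
    linarith
  calc ∫ ω, f (x - η • g ω) ∂μ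
      ≤ ∫ ω, (f x - η * ⟪g ω, Gf x⟫ + L / 2 * η ^ 2 * ‖g ω‖ ^ 2) ∂μ :=
        integral_mono hf (hlinear.add (hg2.const_mul _)) hpointwise
    _ = f x - η * ∫ ω, ⟪g ω, Gf x⟫ ∂μ + L / 2 * η ^ 2 * ∫ ω, ‖g ω‖ ^ 2 ∂μ := by
      rw [integral_add hlinear (hg2.const_mul _),
        integral_sub (integrable_const _) ((hg.inner_const _).const_mul η), integral_const,
        integral_const_mul, integral_const_mul, probReal_univ, one_smul]

end

theorem one_step_descent_general
    {d : ℕ} {Ω : Type*} [MeasurableSpace Ω] (μ : Measure Ω) [IsProbabilityMeasure μ]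
    (f : EuclideanSpace ℝ (Fin d) → ℝ)
    (Gf : EuclideanSpace ℝ (Fin d) → EuclideanSpace ℝ (Fin d))
    (Lc : ℝ) (hLc : 0 ≤ Lc)
    (hgrad : ∀ y, HasGradientAt f (Gf y) y)
    (hLip : ∀ y z, ‖Gf y - Gf z‖ ≤ Lc * ‖y - z‖)
    (x : EuclideanSpace ℝ (Fin d))
    (N : EuclideanSpace ℝ (Fin d) → ℝ)
    (A : Matrix (Fin d) (Fin d) ℝ)
    (α η ρ σ R : ℝ)
    (hη : 0 < η)
    (gt : Ω → EuclideanSpace ℝ (Fin d))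
    (hgt_int : Integrable gt μ)
    (hgt2_int : Integrable (fun ω => ‖gt ω‖ ^ 2) μ)
    (hf_int : Integrable (fun ω => f (x - η • gt ω)) μ)
    (hdesc : N (Gf x) ^ α + R ≤ ∫ ω, (inner ℝ (gt ω) (Gf x) : ℝ) ∂μ)
    (hsec : ∫ ω, ‖gt ω‖ ^ 2 ∂μ ≤ ρ * quadForm A (Gf x) + σ ^ 2) :
    η * (N (Gf x) ^ α - (Lc * η * ρ / 2) * quadForm A (Gf x))
      ≤ f x - (∫ ω, f (x - η • gt ω) ∂μ) - η * R + Lc * η ^ 2 * σ ^ 2 / 2 := by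
  have hstep := integral_comp_sub_smul_le hgrad hLip x η hgt_int hgt2_int hf_int
  have hdesc' := mul_le_mul_of_nonneg_left hdesc hη.le
  have hsec' := mul_le_mul_of_nonneg_left hsec (by positivity : 0 ≤ Lc / 2 * η ^ 2)
  linarith

/-- One-step descent inequality (Proposition 1 of the paper).  If `f` has an
`L`-Lipschitz gradient, the compressed stochastic gradient `g̃` satisfies the descent
condition `E⟪g̃, ∇f(x)⟫ ≥ N(∇f(x))^α + R` and the second-moment bound
`E‖g̃‖² ≤ ρ ‖∇f(x)‖_A² + σ²`, then
`η (N(∇f(x))^α − (Lηρ/2) ‖∇f(x)‖_A²) ≤ f(x) − E f(x − η g̃) − η R + L η² σ² / 2`. -/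
theorem one_step_descent
    {d : ℕ} {Ω : Type*} [MeasurableSpace Ω] (μ : Measure Ω) [IsProbabilityMeasure μ]
    (f : EuclideanSpace ℝ (Fin d) → ℝ)
    (Gf : EuclideanSpace ℝ (Fin d) → EuclideanSpace ℝ (Fin d))
    (Lc : ℝ) (hLc : 0 ≤ Lc)
    (hgrad : ∀ y, HasGradientAt f (Gf y) y)
    (hLip : ∀ y z, ‖Gf y - Gf z‖ ≤ Lc * ‖y - z‖)
    (x : EuclideanSpace ℝ (Fin d))
    (N : EuclideanSpace ℝ (Fin d) → ℝ)
    (hN_add : ∀ y z, N (y + z) ≤ N y + N z)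
    (hN_smul : ∀ (c : ℝ) y, N (c • y) = |c| * N y)
    (hN_zero : ∀ y, N y = 0 ↔ y = 0)
    (A : Matrix (Fin d) (Fin d) ℝ) (hA : A.PosDef)
    (α η ρ σ R : ℝ) (hα0 : 0 < α) (hα2 : α ≤ 2)
    (hη : 0 < η) (hρ : 0 < ρ) (hσ : 0 ≤ σ)
    (gt : Ω → EuclideanSpace ℝ (Fin d))
    (hgt_int : Integrable gt μ)
    (hgt2_int : Integrable (fun ω => ‖gt ω‖ ^ 2) μ)
    (hf_int : Integrable (fun ω => f (x - η • gt ω)) μ)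
    (hdesc : N (Gf x) ^ α + R ≤ ∫ ω, (inner ℝ (gt ω) (Gf x) : ℝ) ∂μ)
    (hsec : ∫ ω, ‖gt ω‖ ^ 2 ∂μ ≤ ρ * quadForm A (Gf x) + σ ^ 2) :
    η * (N (Gf x) ^ α - (Lc * η * ρ / 2) * quadForm A (Gf x))
      ≤ f x - (∫ ω, f (x - η • gt ω) ∂μ) - η * R + Lc * η ^ 2 * σ ^ 2 / 2 :=
  one_step_descent_general μ f Gf Lc hLc hgrad hLip x N A α η ρ σ R hη gt hgt_int hgt2_int hf_int
    hdesc hsec
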